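/- arXiv:0803.0100 — 4 statements merged into one kernel-verified Lean document; each statement's English description precedes it below -/
import Mathlib

section
/- Let r = pq with p, q > 1, and let M be the r×r binary circulant matrix whose first row c satisfies c_{(k+i) mod r} = 1 for some fixed k and all i = 0, 1, ..., p-1, and c_j = 0 otherwise. Then rank(M) = r - p + 1 over F₂. -/
open Finset

lemma aux_sum_range_zmod (p : ℕ) [NeZero p] (g : ZMod p → ZMod 2) :
    ∑ s ∈ Finset.range p, g ((s : ℕ) : ZMod p) = ∑ t : ZMod p, g t := by
  refine Finset.sum_nbij' (fun s => ((s : ℕ) : ZMod p)) (fun t => t.val) ?_ ?_ ?_ ?_ ?_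
  · intro s hs; exact Finset.mem_univ _
  · intro t ht
    simp only [Finset.mem_range]
    exact ZMod.val_lt t
  · intro s hs
    simp only [Finset.mem_range] at hs
    show ((s : ZMod p)).val = s
    rw [ZMod.val_natCast, Nat.mod_eq_of_lt hs]
  · intro t ht
    show ((t.val : ℕ) : ZMod p) = t
    rw [ZMod.natCast_val, ZMod.cast_id]
  · intro s hs; rfl

lemma aux_step (p r : ℕ) [NeZero r] (hp : 0 < p) (x : ZMod r → ZMod 2)
    (hwin : ∀ j : ZMod r, ∑ s ∈ Finset.range p, x (j + (s : ℕ)) = 0) :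
    ∀ j : ZMod r, x (j + (p : ℕ)) = x j := by
  obtain ⟨m, rfl⟩ : ∃ m, p = m + 1 := ⟨p - 1, by omega⟩
  intro j
  have h1 := hwin j
  have h2 := hwin (j + 1)
  rw [Finset.sum_range_succ'] at h1
  rw [Finset.sum_range_succ] at h2
  have hterm : ∀ s : ℕ, x (j + ((s + 1 : ℕ) : ZMod r)) = x (j + 1 + (s : ℕ)) := by
    intro s; congr 1; push_cast; ring
  rw [Finset.sum_congr rfl (fun s _ => hterm s)] at h1
  have : x (j + ((0 : ℕ) : ZMod r)) = x (j + 1 + (m : ℕ)) := by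
    have := h1; have := h2
    linear_combination h1 - h2
  rw [Nat.cast_zero, add_zero] at this
  rw [this]; congr 1; push_cast; ring

lemma aux_ker_rank (p r : ℕ) [NeZero r] [NeZero p] (hdvd : p ∣ r) (hpr : p ≤ r)
    (K : Submodule (ZMod 2) (ZMod r → ZMod 2))
    (hK : ∀ x, x ∈ K ↔ ∀ j : ZMod r, ∑ s ∈ Finset.range p, x (j + (s : ℕ)) = 0) :
    Module.finrank (ZMod 2) K = p - 1 := by
  have hp : 0 < p := Nat.pos_of_ne_zero (NeZero.ne p)
  -- ring hom down
  set f : ZMod r →+* ZMod p := ZMod.castHom hdvd (ZMod p) with hf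
  set ψ : ZMod p → ZMod r := fun t => ((t.val : ℕ) : ZMod r) with hψ
  have hfψ : ∀ t : ZMod p, f (ψ t) = t := by
    intro t
    show f ((t.val : ℕ) : ZMod r) = t
    rw [map_natCast, ZMod.natCast_val, ZMod.cast_id]
  have hfval : ∀ j : ZMod r, (f j).val = j.val % p := by
    intro j
    conv_lhs => rw [show j = ((j.val : ℕ) : ZMod r) by rw [ZMod.natCast_val, ZMod.cast_id]]
    rw [map_natCast, ZMod.val_natCast]
  -- multiples periodicity
  have hmult : ∀ x : ZMod r → ZMod 2,
      (∀ j : ZMod r, ∑ s ∈ Finset.range p, x (j + (s : ℕ)) = 0) →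
      ∀ (n : ℕ) (j : ZMod r), x (j + ((p * n : ℕ) : ZMod r)) = x j := by
    intro x hx n
    induction n with
    | zero => intro j; simp
    | succ n ih =>
      intro j
      have : ((p * (n + 1) : ℕ) : ZMod r) = ((p * n : ℕ) : ZMod r) + ((p : ℕ) : ZMod r) := by
        push_cast; ring
      rw [this, ← add_assoc, aux_step p r hp x hx (j + ((p * n : ℕ) : ZMod r)), ih j]
  have hcompat : ∀ x : ZMod r → ZMod 2,
      (∀ j : ZMod r, ∑ s ∈ Finset.range p, x (j + (s : ℕ)) = 0) →
      ∀ j : ZMod r, x (ψ (f j)) = x j := by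
    intro x hx j
    show x (((f j).val : ℕ) : ZMod r) = x j
    rw [hfval]
    conv_rhs => rw [show j = ((j.val : ℕ) : ZMod r) by rw [ZMod.natCast_val, ZMod.cast_id]]
    conv_rhs => rw [show j.val = j.val % p + p * (j.val / p) from (Nat.mod_add_div _ _).symm]
    rw [Nat.cast_add, hmult x hx (j.val / p) (((j.val % p : ℕ) : ZMod r))]
  -- the sum functional
  set σ : (ZMod p → ZMod 2) →ₗ[ZMod 2] ZMod 2 := ∑ t : ZMod p, LinearMap.proj t with hσ
  have hσapp : ∀ y : ZMod p → ZMod 2, σ y = ∑ t : ZMod p, y t := by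
    intro y; simp [hσ, LinearMap.sum_apply, LinearMap.proj_apply]
  set T : Submodule (ZMod 2) (ZMod p → ZMod 2) := LinearMap.ker σ with hT
  set F : (ZMod p → ZMod 2) →ₗ[ZMod 2] (ZMod r → ZMod 2) :=
    LinearMap.funLeft (ZMod 2) (ZMod 2) f with hF
  have hFinj : Function.Injective F :=
    LinearMap.funLeft_injective_of_surjective (ZMod 2) (ZMod 2) f
      (fun t => ⟨ψ t, hfψ t⟩)
  have hKT : K = Submodule.map F T := by
    apply le_antisymm
    · intro x hx
      rw [hK] at hx
      refine ⟨x ∘ ψ, ?_, ?_⟩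
      · show x ∘ ψ ∈ LinearMap.ker σ
        rw [LinearMap.mem_ker, hσapp]
        have := aux_sum_range_zmod p (x ∘ ψ)
        rw [← this]
        have h0 := hx 0
        rw [← h0]
        apply Finset.sum_congr rfl
        intro s hs
        simp only [Finset.mem_range] at hs
        show x (((((s : ℕ) : ZMod p)).val : ℕ) : ZMod r) = _
        rw [ZMod.val_natCast, Nat.mod_eq_of_lt hs, zero_add]
      · funext j
        show x (ψ (f j)) = x j
        exact hcompat x hx j
    · rintro _ ⟨y, hy, rfl⟩
      rw [hK]
      intro j
      have : ∀ s : ℕ, (F y) (j + (s : ℕ)) = y (f j + ((s : ℕ) : ZMod p)) := by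
        intro s
        show y (f (j + (s : ℕ))) = _
        rw [map_add, map_natCast]
      rw [Finset.sum_congr rfl (fun s _ => this s)]
      rw [aux_sum_range_zmod p (fun u => y (f j + u))]
      rw [SetLike.mem_coe, hT, LinearMap.mem_ker, hσapp] at hy
      rw [← hy]
      exact Equiv.sum_comp (Equiv.addLeft (f j)) y
  have hTK : Module.finrank (ZMod 2) T = Module.finrank (ZMod 2) K := by
    rw [hKT]
    exact (Submodule.equivMapOfInjective F hFinj T).finrank_eq
  -- finrank T = p - 1
  have hσsurj : LinearMap.range σ = ⊤ := by
    rw [LinearMap.range_eq_top]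
    intro z
    refine ⟨Pi.single 0 z, ?_⟩
    rw [hσapp]
    simp [Finset.sum_pi_single']
  have hrn := LinearMap.finrank_range_add_finrank_ker σ
  rw [hσsurj, finrank_top, Module.finrank_self, Module.finrank_pi, ZMod.card] at hrn
  rw [← hT] at hrn
  omega

/-- Let `r = p·q` with `p, q > 1`, and let `M` be the `r × r` binary circulant matrix whose
first row `c` has `c_{(k+i) mod r} = 1` for some fixed `k` and all `i = 0, …, p-1`, and
`c_j = 0` otherwise.  Then `rank M = r - p + 1` over `𝔽₂`. -/
theorem stmt_3 (p q r k : ℕ) [NeZero r] (hp : 1 < p) (hq : 1 < q) (hr : r = p * q)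
    (c : ZMod r → ZMod 2)
    (hc1 : ∀ i : ℕ, i < p → c ((k + i : ℕ) : ZMod r) = 1)
    (hc0 : ∀ j : ZMod r, (∀ i : ℕ, i < p → j ≠ ((k + i : ℕ) : ZMod r)) → c j = 0) :
    (Matrix.circulant (fun i : ZMod r => c (-i))).rank = r - p + 1 := by
  haveI : NeZero p := ⟨by omega⟩
  have hdvd : p ∣ r := ⟨q, hr⟩
  have hpr2 : 2 * p ≤ r := by
    have h2 : p * 2 ≤ p * q := Nat.mul_le_mul_left p hq
    omega
  have hpr : p ≤ r := by omega
  -- cast injectivity below r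
  have hcastinj : ∀ a b : ℕ, a < r → b < r → ((a : ZMod r) = (b : ZMod r)) → a = b := by
    intro a b ha hb hab
    have := congrArg ZMod.val hab
    rwa [ZMod.val_natCast, ZMod.val_natCast, Nat.mod_eq_of_lt ha, Nat.mod_eq_of_lt hb] at this
  set M : Matrix (ZMod r) (ZMod r) (ZMod 2) := Matrix.circulant (fun i : ZMod r => c (-i)) with hM
  -- key formula for mulVec
  have hkey : ∀ (x : ZMod r → ZMod 2) (i : ZMod r),
      M.mulVec x i = ∑ s ∈ Finset.range p, x (i + ((k + s : ℕ) : ZMod r)) := by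
    intro x i
    have hMij : ∀ j : ZMod r, M i j = c (j - i) := by
      intro j; show c (-(i - j)) = c (j - i); ring_nf
    have hinj : Set.InjOn (fun s : ℕ => i + ((k + s : ℕ) : ZMod r)) (Finset.range p) := by
      intro a ha b hb hab
      simp only [Finset.coe_range, Set.mem_Iio] at ha hb
      simp only [Nat.cast_add] at hab
      have : ((a : ℕ) : ZMod r) = ((b : ℕ) : ZMod r) := by
        have := add_left_cancel hab
        exact add_left_cancel this
      exact hcastinj a b (lt_of_lt_of_le ha hpr) (lt_of_lt_of_le hb hpr) this
    rw [← Finset.sum_image hinj]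
    show (∑ j : ZMod r, M i j * x j) = _
    rw [← Finset.sum_subset (Finset.subset_univ ((Finset.range p).image
        (fun s : ℕ => i + ((k + s : ℕ) : ZMod r)))) ?_]
    · apply Finset.sum_congr rfl
      intro j hj
      simp only [Finset.mem_image, Finset.mem_range] at hj
      obtain ⟨s, hs, rfl⟩ := hj
      rw [hMij]
      have : i + ((k + s : ℕ) : ZMod r) - i = ((k + s : ℕ) : ZMod r) := by ring
      rw [this, hc1 s hs, one_mul]
    · intro j _ hj
      simp only [Finset.mem_image, Finset.mem_range, not_exists, not_and] at hj
      rw [hMij]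
      have : c (j - i) = 0 := by
        apply hc0
        intro s hs hne
        exact hj s hs (by rw [← hne]; ring)
      rw [this, zero_mul]
  -- kernel characterization
  have hker : ∀ x : ZMod r → ZMod 2, x ∈ LinearMap.ker M.mulVecLin ↔
      ∀ j : ZMod r, ∑ s ∈ Finset.range p, x (j + ((s : ℕ) : ZMod r)) = 0 := by
    intro x
    rw [LinearMap.mem_ker]
    constructor
    · intro h j
      have := congrFun h (j - ((k : ℕ) : ZMod r))
      rw [Matrix.mulVecLin_apply, hkey, Pi.zero_apply] at this
      rw [← this]
      apply Finset.sum_congr rfl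
      intro s _
      congr 1
      push_cast
      ring
    · intro h
      funext i
      rw [Matrix.mulVecLin_apply, hkey, Pi.zero_apply]
      have := h (i + ((k : ℕ) : ZMod r))
      rw [← this]
      apply Finset.sum_congr rfl
      intro s _
      congr 1
      push_cast
      ring
  have hkfr : Module.finrank (ZMod 2) (LinearMap.ker M.mulVecLin) = p - 1 :=
    aux_ker_rank p r hdvd hpr (LinearMap.ker M.mulVecLin) hker
  have hrn := LinearMap.finrank_range_add_finrank_ker M.mulVecLin
  rw [hkfr, Module.finrank_pi, ZMod.card] at hrn
  have hrank : M.rank = Module.finrank (ZMod 2) (LinearMap.range M.mulVecLin) := rfl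
  rw [hrank]
  omega
end

section
/- A polynomial parity check matrix H(X) over F₂[X]/(X^r - 1) satisfies H(X)·H(X)^T = 0 (i.e., the corresponding binary quasi-cyclic code is dual-containing) if and only if for every pair of rows i, j of the exponent matrix, the difference vector c_i - c_j (computed entrywise mod r) is multiplicity even. -/
/-!
Modulo `X ^ r - 1` the product `X ^ (c i k).val * X ^ (-c j k).val` reduces to
`X ^ (c i k - c j k).val`, so the `(i, j)` entry of `H(X) H(X)ᵀ` is the class of
`∑ k, X ^ (c i k - c j k).val`. That polynomial has degree `< r`, hence it vanishes in the
quotient iff it vanishes, and over a ring of characteristic `2` its coefficient at `m` is the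
parity of the number of `k` with `(c i k - c j k).val = m`.
-/

open Polynomial

def MultiplicityEven {ι α : Type*} [Fintype ι] [DecidableEq α] (d : ι → α) : Prop :=
  ∀ a, Even (Finset.univ.filter fun k => d k = a).card

theorem multiplicityEven_comp_iff {ι α β : Type*} [Fintype ι] [DecidableEq α] [DecidableEq β]
    {f : α → β} (hf : Function.Injective f) (d : ι → α) :
    MultiplicityEven (f ∘ d) ↔ MultiplicityEven d := by
  have filter_eq (a : α) :
      (Finset.univ.filter fun k => f (d k) = f a) = Finset.univ.filter fun k => d k = a :=
    Finset.filter_congr fun _ _ => hf.eq_iff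
  refine ⟨fun h a => filter_eq a ▸ h (f a), fun h b => ?_⟩
  by_cases hb : ∃ a, f a = b
  · obtain ⟨a, rfl⟩ := hb
    exact (filter_eq a).symm ▸ h a
  · simp [Finset.filter_false_of_mem fun k _ h => hb ⟨d k, h⟩]

theorem coeff_sum_X_pow {R ι : Type*} [Semiring R] (s : Finset ι) (e : ι → ℕ) (m : ℕ) :
    (∑ k ∈ s, (X : R[X]) ^ e k).coeff m = ((s.filter fun k => e k = m).card : R) := by
  simp only [finsetSum_coeff, coeff_X_pow, eq_comm (a := m), Finset.natCast_card_filter]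

theorem sum_X_pow_eq_zero_iff {R ι : Type*} [Ring R] [CharP R 2] [Fintype ι] (e : ι → ℕ) :
    ∑ k, (X : R[X]) ^ e k = 0 ↔ MultiplicityEven e := by
  simp only [Polynomial.ext_iff, coeff_sum_X_pow, coeff_zero, CharP.cast_eq_zero_iff R 2,
    MultiplicityEven, even_iff_two_dvd]

section QuotientByXPowSubOne

variable {R : Type*} [CommRing R]

theorem mk_X_pow_sub_one_X_pow_mod (r n : ℕ) :
    Ideal.Quotient.mk (Ideal.span {(X : R[X]) ^ r - 1}) (X ^ (n % r)) =
      Ideal.Quotient.mk (Ideal.span {(X : R[X]) ^ r - 1}) (X ^ n) := by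
  have hX_pow : Ideal.Quotient.mk (Ideal.span {(X : R[X]) ^ r - 1}) (X ^ r) = 1 := by
    rw [← sub_eq_zero, ← map_one (Ideal.Quotient.mk _), ← map_sub,
      Ideal.Quotient.eq_zero_iff_mem]
    exact Ideal.subset_span rfl
  conv_rhs => rw [← Nat.div_add_mod n r, pow_add, pow_mul, map_mul, map_pow, hX_pow]
  rw [one_pow, one_mul]

theorem mk_X_pow_sub_one_X_pow_val_mul {r : ℕ} [NeZero r] (a b : ZMod r) :
    Ideal.Quotient.mk (Ideal.span {(X : R[X]) ^ r - 1}) (X ^ a.val) *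
        Ideal.Quotient.mk (Ideal.span {(X : R[X]) ^ r - 1}) (X ^ b.val) =
      Ideal.Quotient.mk (Ideal.span {(X : R[X]) ^ r - 1}) (X ^ (a + b).val) := by
  rw [← map_mul, ← pow_add, ZMod.val_add, mk_X_pow_sub_one_X_pow_mod]

theorem mk_X_pow_sub_one_eq_zero_iff [Nontrivial R] {r : ℕ} (hr : 0 < r) {p : R[X]}
    (hp : p.degree < r) : Ideal.Quotient.mk (Ideal.span {(X : R[X]) ^ r - 1}) p = 0 ↔ p = 0 := by
  have hmonic : ((X : R[X]) ^ r - 1).Monic := by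
    simpa using monic_X_pow_sub_C (1 : R) hr.ne'
  have hdeg : p.degree < ((X : R[X]) ^ r - 1).degree := by
    rwa [← C_1, degree_X_pow_sub_C hr]
  rw [Ideal.Quotient.eq_zero_iff_mem, Ideal.mem_span_singleton,
    ← modByMonic_eq_zero_iff_dvd hmonic, (modByMonic_eq_self_iff hmonic).mpr hdeg]

end QuotientByXPowSubOne

theorem degree_sum_X_pow_val_lt {R ι : Type*} [Semiring R] {r : ℕ} [NeZero r] (s : Finset ι)
    (d : ι → ZMod r) : (∑ k ∈ s, (X : R[X]) ^ (d k).val).degree < r := by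
  refine (degree_sum_le _ _).trans_lt ((Finset.sup_lt_iff (WithBot.bot_lt_coe r)).mpr ?_)
  intro k _
  exact (degree_X_pow_le _).trans_lt (WithBot.coe_lt_coe.mpr (ZMod.val_lt (d k)))

/-- A Type-I QC-LDPC polynomial parity-check matrix `H(X) = [X^{c_{j,l}}]` over
`𝔽₂[X]/(X^r - 1)` satisfies `H(X)·H(X)ᵀ = 0` (the code is dual-containing) iff every
difference `c_i - c_j` of rows of the exponent matrix is multiplicity even. -/
theorem stmt_9 (r J L : ℕ) [NeZero r] (c : Fin J → Fin L → ZMod r) :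
    (Matrix.of fun (j : Fin J) (l : Fin L) =>
        Ideal.Quotient.mk (Ideal.span ({Polynomial.X ^ r - 1} : Set (Polynomial (ZMod 2))))
          (Polynomial.X ^ (c j l).val)) *
      (Matrix.of fun (l : Fin L) (j : Fin J) =>
        Ideal.Quotient.mk (Ideal.span ({Polynomial.X ^ r - 1} : Set (Polynomial (ZMod 2))))
          (Polynomial.X ^ ((-(c j l) : ZMod r)).val)) = 0 ↔
    ∀ i j : Fin J, ∀ v : ZMod r,
      Even ((Finset.univ.filter fun k : Fin L => c i k - c j k = v).card) := by
  rw [← Matrix.ext_iff]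
  refine forall₂_congr fun i j => ?_
  simp only [Matrix.mul_apply, Matrix.of_apply, Matrix.zero_apply,
    mk_X_pow_sub_one_X_pow_val_mul, ← sub_eq_add_neg, ← map_sum]
  rw [mk_X_pow_sub_one_eq_zero_iff (Nat.pos_of_neZero r) (degree_sum_X_pow_val_lt _ _),
    sum_X_pow_eq_zero_iff]
  exact multiplicityEven_comp_iff (ZMod.val_injective r) _
end

section
/- For any Type-I quasi-cyclic LDPC code with L ≥ 2 columns of monomials, if the code is dual-containing (every row difference of the exponent matrix is multiplicity even) then the Tanner graph contains a cycle of length 4; equivalently, there is no dual-containing Type-I QC-LDPC code with girth ≥ 6. -/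
/-- For any Type-I QC-LDPC code with `J ≥ 2` layers and `L ≥ 2` columns of monomials:
if the code is dual-containing (every row difference of the exponent matrix is
multiplicity even), then there are two distinct layers between which some difference value
repeats, i.e. the Tanner graph has a 4-cycle; so no dual-containing Type-I QC-LDPC code
has girth ≥ 6. -/
theorem stmt_10 (r J L : ℕ) [NeZero r] (hJ : 2 ≤ J) (hL : 2 ≤ L)
    (c : Fin J → Fin L → ZMod r)
    (heven : ∀ i j : Fin J, ∀ v : ZMod r,
      Even ((Finset.univ.filter fun k : Fin L => c i k - c j k = v).card)) :
    ∃ i j : Fin J, i ≠ j ∧ ∃ k k' : Fin L, k ≠ k' ∧ c i k - c j k = c i k' - c j k' := by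
  have hJ' : (0 : ℕ) < J := by omega
  have hJ1 : (1 : ℕ) < J := hJ
  have hL' : (0 : ℕ) < L := by omega
  set i : Fin J := ⟨0, hJ'⟩
  set j : Fin J := ⟨1, hJ1⟩
  set k0 : Fin L := ⟨0, hL'⟩
  set v : ZMod r := c i k0 - c j k0
  set S : Finset (Fin L) := Finset.univ.filter fun k => c i k - c j k = v with hS
  have hmem : k0 ∈ S := by simp [hS, v]
  have hcard : 1 < S.card := by
    obtain ⟨m, hm⟩ := heven i j v
    have hm' : S.card = m + m := hm
    have h1 : 1 ≤ S.card := Finset.card_pos.mpr ⟨k0, hmem⟩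
    omega
  obtain ⟨a, ha, b, hb, hab⟩ := Finset.one_lt_card.mp hcard
  refine ⟨i, j, by simp [i, j, Fin.ext_iff], a, b, hab, ?_⟩
  have := (Finset.mem_filter.mp ha).2
  have := (Finset.mem_filter.mp hb).2
  simp_all
end

section
/- For a Type-II quasi-cyclic LDPC code with polynomial parity check matrix H(X) whose entries are zero, monomials, or binomials over F₂[X]/(X^r-1): the code is dual-containing (H·H^T = 0) if and only if every row difference c_i - c_j of the exponent matrix (with the generalized difference rules) is multiplicity even. -/
/-!
Since `X ^ r = 1` in `𝔽₂[X]/(X^r - 1)`, exponents live in `ZMod r` and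
`X^a · X^(-b) = X^(a - b)`. Hence the `(i, j)` entry of `H(X)·H(X)ᵀ` is the class of
`∑ v, N_{ij}(v) • X^v`, where `N_{ij}(v)` counts the pairs of exponents of rows `i` and `j`
(in a common column) with difference `v`. This polynomial has degree `< r`, so it vanishes
modulo the monic `X^r - 1` only if it is zero, i.e. only if every `N_{ij}(v)` is even.
-/

open Polynomial Finset

theorem pow_val_add_of_pow_eq_one {M : Type*} [Monoid M] {r : ℕ} [NeZero r] {x : M}
    (hx : x ^ r = 1) (a b : ZMod r) : x ^ (a + b).val = x ^ a.val * x ^ b.val := by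
  rw [← pow_add, pow_eq_pow_mod (a.val + b.val) hx, ZMod.val_add]

theorem sum_pow_val_mul_sum_pow_val_neg {S : Type*} [CommSemiring S] {r : ℕ} [NeZero r] {x : S}
    (hx : x ^ r = 1) (A B : Finset (ZMod r)) :
    (∑ a ∈ A, x ^ a.val) * (∑ b ∈ B, x ^ (-b).val) =
      ∑ v, #{ab ∈ A ×ˢ B | ab.1 - ab.2 = v} • x ^ v.val := by
  simp_rw [sum_mul_sum, ← sum_product', ← pow_val_add_of_pow_eq_one hx, ← sub_eq_add_neg,
    ← sum_const, sum_fiberwise' (A ×ˢ B) (fun ab => ab.1 - ab.2) (fun v => x ^ v.val)]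

section CyclicQuotient

variable {R : Type*} [CommRing R] (r : ℕ)

local notation "π" => Ideal.Quotient.mk (Ideal.span {(X : R[X]) ^ r - 1})

theorem mk_X_pow_eq_one : π X ^ r = 1 := by
  rw [← map_pow, ← sub_eq_zero, ← map_one (Ideal.Quotient.mk _), ← map_sub,
    Ideal.Quotient.eq_zero_iff_mem]
  exact Ideal.mem_span_singleton_self _

theorem mk_eq_zero_iff_of_degree_lt [Nontrivial R] (hr : r ≠ 0) {p : R[X]}
    (hp : p.degree < r) : π p = 0 ↔ p = 0 := by
  have hmonic : (X ^ r - 1 : R[X]).Monic := by simpa using monic_X_pow_sub_C (1 : R) hr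
  have hdeg : (X ^ r - 1 : R[X]).degree = r := by
    simpa using degree_X_pow_sub_C (Nat.pos_of_ne_zero hr) (1 : R)
  rw [Ideal.Quotient.eq_zero_iff_mem, Ideal.mem_span_singleton,
    ← modByMonic_eq_zero_iff_dvd hmonic, (modByMonic_eq_self_iff hmonic).2 (hdeg ▸ hp)]

variable [NeZero r]

theorem coeff_sum_nsmul_X_pow_val (n : ZMod r → ℕ) (v : ZMod r) :
    (∑ w, n w • X ^ w.val : R[X]).coeff v.val = n v := by
  simp [coeff_X_pow, (ZMod.val_injective r).eq_iff]

theorem degree_sum_nsmul_X_pow_val_lt (n : ZMod r → ℕ) :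
    (∑ w, n w • X ^ w.val : R[X]).degree < r := by
  rw [← mem_degreeLT]
  refine Submodule.sum_mem _ fun w _ => nsmul_mem (mem_degreeLT.2 ?_) _
  exact (degree_X_pow_le _).trans_lt (by exact_mod_cast ZMod.val_lt w)

theorem mk_sum_nsmul_X_pow_val_eq_zero_iff [Nontrivial R] (n : ZMod r → ℕ) :
    π (∑ w, n w • X ^ w.val : R[X]) = 0 ↔ ∀ v, (n v : R) = 0 := by
  rw [mk_eq_zero_iff_of_degree_lt r (NeZero.ne r) (degree_sum_nsmul_X_pow_val_lt r n)]
  refine ⟨fun h v => ?_, fun h => ?_⟩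
  · rw [← coeff_sum_nsmul_X_pow_val r n v, h, coeff_zero]
  · exact sum_eq_zero fun w _ => by rw [nsmul_eq_mul, ← map_natCast C, h w, C_0, zero_mul]

theorem of_mul_of_apply_eq_mk_sum_card_nsmul {ι κ : Type*} [Fintype κ]
    (E : ι → κ → Finset (ZMod r)) (i j : ι) :
    (Matrix.of (fun i l => π (∑ k ∈ E i l, (X : R[X]) ^ k.val)) *
      Matrix.of (fun l j => π (∑ k ∈ E j l, (X : R[X]) ^ (-k).val))) i j =
    π (∑ v, (∑ l, #{ab ∈ E i l ×ˢ E j l | ab.1 - ab.2 = v}) • (X : R[X]) ^ v.val) := by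
  simp only [Matrix.mul_apply, Matrix.of_apply, map_sum, map_pow, map_nsmul,
    sum_pow_val_mul_sum_pow_val_neg (mk_X_pow_eq_one r), sum_smul]
  exact sum_comm

end CyclicQuotient

theorem stmt_12_general (r J L : ℕ) [NeZero r] (E : Fin J → Fin L → Finset (ZMod r)) :
    (Matrix.of fun (j : Fin J) (l : Fin L) =>
        Ideal.Quotient.mk (Ideal.span ({Polynomial.X ^ r - 1} : Set (Polynomial (ZMod 2))))
          (∑ k ∈ E j l, Polynomial.X ^ k.val)) *
      (Matrix.of fun (l : Fin L) (j : Fin J) =>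
        Ideal.Quotient.mk (Ideal.span ({Polynomial.X ^ r - 1} : Set (Polynomial (ZMod 2))))
          (∑ k ∈ E j l, Polynomial.X ^ ((-k : ZMod r)).val)) = 0 ↔
    ∀ i j : Fin J, ∀ v : ZMod r,
      Even (∑ l : Fin L,
        ((E i l ×ˢ E j l).filter fun ab => ab.1 - ab.2 = v).card) := by
  rw [← Matrix.ext_iff]
  refine forall₂_congr fun i j => ?_
  rw [Matrix.zero_apply, of_mul_of_apply_eq_mk_sum_card_nsmul, mk_sum_nsmul_X_pow_val_eq_zero_iff]
  simp only [ZMod.natCast_eq_zero_iff_even]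

/-- For a Type-II QC-LDPC code: each entry of the `J × L` polynomial parity-check matrix
over `𝔽₂[X]/(X^r-1)` is zero, a monomial, or a binomial, recorded as a finset
`E j l ⊆ ZMod r` of exponents with at most 2 elements.  The code is dual-containing
(`H(X)·H(X)ᵀ = 0`) iff every generalized row difference of the exponent matrix is
multiplicity even, i.e. for all rows `i, j` and every value `v`, the number of triples
`(l, a, b)` with `a ∈ E i l`, `b ∈ E j l`, `a - b = v` is even. -/
theorem stmt_12 (r J L : ℕ) [NeZero r] (E : Fin J → Fin L → Finset (ZMod r))
    (hcard : ∀ j l, (E j l).card ≤ 2) :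
    (Matrix.of fun (j : Fin J) (l : Fin L) =>
        Ideal.Quotient.mk (Ideal.span ({Polynomial.X ^ r - 1} : Set (Polynomial (ZMod 2))))
          (∑ k ∈ E j l, Polynomial.X ^ k.val)) *
      (Matrix.of fun (l : Fin L) (j : Fin J) =>
        Ideal.Quotient.mk (Ideal.span ({Polynomial.X ^ r - 1} : Set (Polynomial (ZMod 2))))
          (∑ k ∈ E j l, Polynomial.X ^ ((-k : ZMod r)).val)) = 0 ↔
    ∀ i j : Fin J, ∀ v : ZMod r,
      Even (∑ l : Fin L,
        ((E i l ×ˢ E j l).filter fun ab => ab.1 - ab.2 = v).card) :=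
  stmt_12_general r J L E
end
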